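/- arXiv:math/0309349 — 5 statements merged into one kernel-verified Lean document; each statement's English description precedes it below -/
import Mathlib

section
/- In the power series ring ℚ(t)[[x]], define the q-exponential exp_t(x) = Σ_{n≥0} (t^{n(n-1)/2}/[n]_t!) x^n, where [n]_t = (t^n - t^{-n})/(t - t^{-1}) and [n]_t! = [n]_t [n-1]_t ⋯ [1]_t. Then exp_t(x) · exp_{t^{-1}}(-x) = 1, i.e. exp_t(x) is invertible with inverse exp_{t^{-1}}(-x). -/
open PowerSeries

/-- The quantum integer `[n]_t = (t^n - t^{-n})/(t - t^{-1})` in `ℚ(t)`,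
    evaluated at an arbitrary element `u` of `ℚ(t)`. -/
noncomputable def qInt (u : RatFunc ℚ) (n : ℕ) : RatFunc ℚ :=
  (u ^ n - u⁻¹ ^ n) / (u - u⁻¹)

/-- The quantum factorial `[n]_t! = [n]_t [n-1]_t ⋯ [1]_t`. -/
noncomputable def qFact (u : RatFunc ℚ) (n : ℕ) : RatFunc ℚ :=
  ∏ i ∈ Finset.range n, qInt u (i + 1)

/-- The q-exponential `exp_t(x) = Σ_{n ≥ 0} (t^{n(n-1)/2}/[n]_t!) x^n` as a formal power
    series over `ℚ(t)`, with the variable `t` replaced by an arbitrary `u : ℚ(t)`.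
    Note `n(n-1)/2 = (n choose 2)`. -/
noncomputable def qExp (u : RatFunc ℚ) : PowerSeries (RatFunc ℚ) :=
  PowerSeries.mk fun n => u ^ (n.choose 2) / qFact u n

/-- The series `exp_{u}(−x) = Σ_{n ≥ 0} (-1)^n (u^{n(n-1)/2}/[n]_u!) x^n`, i.e. `exp_u`
    composed with `-x`. -/
noncomputable def qExpNeg (u : RatFunc ℚ) : PowerSeries (RatFunc ℚ) :=
  PowerSeries.mk fun n => (-1) ^ n * (u ^ (n.choose 2) / qFact u n)

namespace QExpAux

open Finset

noncomputable def gInt (q : RatFunc ℚ) (n : ℕ) : RatFunc ℚ := ∑ i ∈ range n, q ^ i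
noncomputable def gFact (q : RatFunc ℚ) (n : ℕ) : RatFunc ℚ := ∏ i ∈ range n, gInt q (i + 1)

noncomputable def gB (q : RatFunc ℚ) : ℕ → ℕ → RatFunc ℚ
  | 0, 0 => 1
  | 0, _ + 1 => 0
  | _ + 1, 0 => 1
  | n + 1, k + 1 => gB q n k + q ^ (k + 1) * gB q n (k + 1)

noncomputable def gG (q : RatFunc ℚ) (n k : ℕ) : RatFunc ℚ :=
  (-1) ^ k * q ^ ((k + 1).choose 2) * gB q n k

lemma gB_zero (q : RatFunc ℚ) (n : ℕ) : gB q n 0 = 1 := by cases n <;> rfl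

lemma gB_eq_zero (q : RatFunc ℚ) : ∀ n k, n < k → gB q n k = 0 := by
  intro n
  induction n with
  | zero => intro k hk; match k, hk with | k+1, _ => rfl
  | succ n ih =>
    intro k hk
    match k, hk with
    | k+1, hk =>
      show gB q n k + q ^ (k+1) * gB q n (k+1) = 0
      rw [ih k (by omega), ih (k+1) (by omega)]; ring

lemma gB_self (q : RatFunc ℚ) (n : ℕ) : gB q n n = 1 := by
  induction n with
  | zero => rfl
  | succ n ih =>
    show gB q n n + q ^ (n+1) * gB q n (n+1) = 1
    rw [ih, gB_eq_zero q n (n+1) (by omega)]; ring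

lemma gInt_succ (q : RatFunc ℚ) (n : ℕ) : gInt q (n + 1) = gInt q n + q ^ n :=
  Finset.sum_range_succ _ n

lemma gFact_succ (q : RatFunc ℚ) (n : ℕ) : gFact q (n + 1) = gFact q n * gInt q (n + 1) :=
  Finset.prod_range_succ _ n

lemma choose_two_succ (k : ℕ) : (k+1+1).choose 2 = (k+1).choose 2 + (k+1) := by
  rw [show (2:ℕ) = 1 + 1 from rfl, Nat.choose_succ_succ (k+1) 1,
    Nat.choose_one_right, Nat.add_comm]

lemma gInt_add (q : RatFunc ℚ) (a b : ℕ) : gInt q (a + b) = gInt q a + q ^ a * gInt q b := by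
  induction b with
  | zero => simp [gInt]
  | succ b ih =>
    rw [show a + (b+1) = (a+b)+1 by omega, gInt_succ, ih, gInt_succ, pow_add]; ring

lemma gB_mul (q : RatFunc ℚ) : ∀ n k, k ≤ n →
    gB q n k * (gFact q k * gFact q (n - k)) = gFact q n := by
  intro n
  induction n with
  | zero => intro k hk; interval_cases k; simp [gB, gFact]
  | succ n ih =>
    intro k hk
    match k with
    | 0 => simp [gB_zero, gFact]
    | k + 1 =>
      rcases eq_or_lt_of_le hk with h | h
      · rw [← h]; simp [gB_self, gFact]
      · have hk' : k + 1 ≤ n := by omega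
        have e1 := ih k (by omega)
        have e2 := ih (k+1) hk'
        have hsplit : gInt q (n + 1) = gInt q (k+1) + q ^ (k+1) * gInt q (n - k) :=
          (show n + 1 = (k+1) + (n-k) by omega) ▸ gInt_add q (k+1) (n-k)
        have hnk : gFact q (n - k) = gFact q (n - (k+1)) * gInt q (n - k) := by
          conv_lhs => rw [show n - k = (n - (k+1)) + 1 by omega]
          rw [gFact_succ, show n - (k+1) + 1 = n - k by omega]
        have hA : gFact q (k+1) = gFact q k * gInt q (k+1) := gFact_succ q k
        show (gB q n k + q ^ (k+1) * gB q n (k+1)) *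
            (gFact q (k+1) * gFact q (n + 1 - (k+1))) = gFact q (n+1)
        rw [show n + 1 - (k+1) = n - k from by omega, gFact_succ q n, hsplit, hA]
        rw [hA] at e2
        linear_combination gInt q (k+1) * e1 + q^(k+1) * gInt q (n-k) * e2 +
          q^(k+1) * gB q n (k+1) * (gFact q k * gInt q (k+1)) * hnk

lemma gauss (q : RatFunc ℚ) (n : ℕ) :
    ∑ k ∈ range (n + 2), (-1 : RatFunc ℚ) ^ k * q ^ (k.choose 2) * gB q (n+1) k = 0 := by
  have key : ∀ k, (-1 : RatFunc ℚ) ^ (k+1) * q ^ ((k+1).choose 2) * gB q (n+1) (k+1)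
      = gG q n (k+1) - gG q n k := by
    intro k
    show (-1 : RatFunc ℚ) ^ (k+1) * q ^ ((k+1).choose 2) *
        (gB q n k + q ^ (k+1) * gB q n (k+1)) = _
    unfold gG
    have c1 := choose_two_succ k
    rw [c1, pow_add, pow_succ]
    ring
  rw [Finset.sum_range_succ']
  show (∑ k ∈ range (n+1), (-1 : RatFunc ℚ)^(k+1) * q^((k+1).choose 2) * gB q (n+1) (k+1))
      + (-1 : RatFunc ℚ)^0 * q^((0:ℕ).choose 2) * gB q (n+1) 0 = 0
  have h1 : (∑ k ∈ range (n+1), (-1 : RatFunc ℚ)^(k+1) * q^((k+1).choose 2) * gB q (n+1) (k+1))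
      = gG q n (n+1) - gG q n 0 := by
    rw [← Finset.sum_range_sub (gG q n) (n+1)]
    exact Finset.sum_congr rfl fun k _ => key k
  rw [h1]
  simp [gG, gB_eq_zero q n (n+1) (by omega), gB_zero]

lemma qInt_inv (u : RatFunc ℚ) (n : ℕ) : qInt u⁻¹ n = qInt u n := by
  unfold qInt
  rw [inv_inv, ← neg_div_neg_eq]
  ring_nf

lemma qFact_inv (u : RatFunc ℚ) (n : ℕ) : qFact u⁻¹ n = qFact u n :=
  Finset.prod_congr rfl fun i _ => qInt_inv u (i+1)

lemma X_pow_sub_one_ne (m : ℕ) (hm : 1 ≤ m) : (RatFunc.X : RatFunc ℚ) ^ m - 1 ≠ 0 := by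
  have h : (RatFunc.X : RatFunc ℚ) ^ m - 1
      = algebraMap (Polynomial ℚ) _ (Polynomial.X ^ m - Polynomial.C 1) := by
    simp [RatFunc.algebraMap_X]
  rw [h, ne_eq, FaithfulSMul.algebraMap_eq_zero_iff]
  exact Polynomial.X_pow_sub_C_ne_zero hm 1

lemma X_sub_inv_ne : (RatFunc.X : RatFunc ℚ) - RatFunc.X⁻¹ ≠ 0 := by
  have hX : (RatFunc.X : RatFunc ℚ) ≠ 0 := RatFunc.X_ne_zero
  have h : RatFunc.X * ((RatFunc.X : RatFunc ℚ) - RatFunc.X⁻¹) = RatFunc.X ^ 2 - 1 := by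
    field_simp
  intro hc
  rw [hc, mul_zero] at h
  exact X_pow_sub_one_ne 2 (by omega) h.symm

lemma gInt_ne (m : ℕ) : gInt ((RatFunc.X : RatFunc ℚ)^2) (m+1) ≠ 0 := by
  have hg : gInt ((RatFunc.X : RatFunc ℚ)^2) (m+1) * ((RatFunc.X)^2 - 1)
      = ((RatFunc.X : RatFunc ℚ)^2)^(m+1) - 1 := geom_sum_mul _ _
  intro hc
  rw [hc, zero_mul, ← pow_mul] at hg
  exact X_pow_sub_one_ne (2*(m+1)) (by omega) hg.symm

lemma gFact_ne (n : ℕ) : gFact ((RatFunc.X : RatFunc ℚ)^2) n ≠ 0 :=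
  Finset.prod_ne_zero_iff.2 fun i _ => gInt_ne i

lemma gInt_eq_qInt (i : ℕ) :
    gInt ((RatFunc.X : RatFunc ℚ)^2) (i+1) = RatFunc.X ^ i * qInt RatFunc.X (i+1) := by
  have hX : (RatFunc.X : RatFunc ℚ) ≠ 0 := RatFunc.X_ne_zero
  have hg : gInt ((RatFunc.X : RatFunc ℚ)^2) (i+1) * ((RatFunc.X)^2 - 1)
      = ((RatFunc.X : RatFunc ℚ)^2)^(i+1) - 1 := geom_sum_mul _ _
  have hXX1 : RatFunc.X * (RatFunc.X : RatFunc ℚ)⁻¹ = 1 := mul_inv_cancel₀ hX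
  have hXYpow : RatFunc.X ^ (i+1) * ((RatFunc.X : RatFunc ℚ)⁻¹) ^ (i+1) = 1 := by
    rw [← mul_pow, hXX1, one_pow]
  rw [qInt, mul_div_assoc', eq_div_iff X_sub_inv_ne]
  apply mul_left_cancel₀ hX
  linear_combination hg - gInt ((RatFunc.X : RatFunc ℚ)^2) (i+1) * hXX1 + hXYpow

lemma gFact_eq_qFact (n : ℕ) :
    gFact ((RatFunc.X : RatFunc ℚ)^2) n = RatFunc.X ^ (n.choose 2) * qFact RatFunc.X n := by
  induction n with
  | zero => simp [gFact, qFact]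
  | succ n ih =>
    have c1 : (n+1).choose 2 = n.choose 2 + n := by
      cases n with
      | zero => rfl
      | succ m => exact choose_two_succ m
    rw [gFact_succ, ih, gInt_eq_qInt, c1, pow_add,
      show qFact RatFunc.X (n+1) = qFact RatFunc.X n * qInt RatFunc.X (n+1) from
        Finset.prod_range_succ _ n]
    ring

lemma qFact_ne (n : ℕ) : qFact (RatFunc.X : RatFunc ℚ) n ≠ 0 := by
  intro hc
  have := gFact_eq_qFact n
  rw [hc, mul_zero] at this
  exact gFact_ne n this

lemma term_eq (n k : ℕ) (hk : k ≤ n) :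
    (RatFunc.X : RatFunc ℚ) ^ (k.choose 2) / qFact RatFunc.X k *
      ((-1) ^ (n - k) * ((RatFunc.X : RatFunc ℚ)⁻¹ ^ ((n-k).choose 2) / qFact RatFunc.X (n-k)))
    = ((-1 : RatFunc ℚ)^n * ((-1)^k * ((RatFunc.X : RatFunc ℚ)^2) ^ (k.choose 2) *
        gB ((RatFunc.X : RatFunc ℚ)^2) n k)) / gFact ((RatFunc.X : RatFunc ℚ)^2) n := by
  have hX : (RatFunc.X : RatFunc ℚ) ≠ 0 := RatFunc.X_ne_zero
  have hsign : (-1 : RatFunc ℚ) ^ (n - k) = (-1)^n * (-1)^k := by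
    rw [← pow_add, show n + k = (n-k) + 2*k by omega, pow_add, pow_mul]
    simp
  rw [eq_div_iff (gFact_ne n), ← gB_mul _ n k hk, gFact_eq_qFact, gFact_eq_qFact, hsign]
  field_simp [qFact_ne k, qFact_ne (n-k)]
  rw [mul_right_comm _ (gB _ n k), mul_assoc _ ((1 / RatFunc.X) ^ _), ← mul_pow, one_div,
    inv_mul_cancel₀ hX, one_pow, mul_one]
  ring

lemma coeff_prod (n : ℕ) :
    (PowerSeries.coeff n) (qExp RatFunc.X * qExpNeg (RatFunc.X : RatFunc ℚ)⁻¹)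
      = if n = 0 then 1 else 0 := by
  rw [PowerSeries.coeff_mul, Finset.Nat.sum_antidiagonal_eq_sum_range_succ_mk]
  simp only [qExp, qExpNeg, PowerSeries.coeff_mk, qFact_inv]
  cases n with
  | zero => simp [qFact]
  | succ m =>
    have h1 : ∑ k ∈ range (m+1+1),
        (RatFunc.X : RatFunc ℚ) ^ (k.choose 2) / qFact RatFunc.X k *
          ((-1) ^ (m+1-k) *
            ((RatFunc.X : RatFunc ℚ)⁻¹ ^ ((m+1-k).choose 2) / qFact RatFunc.X (m+1-k)))
        = ∑ k ∈ range (m+1+1),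
            ((-1 : RatFunc ℚ)^(m+1) * ((-1)^k * ((RatFunc.X : RatFunc ℚ)^2) ^ (k.choose 2) *
              gB ((RatFunc.X : RatFunc ℚ)^2) (m+1) k)) / gFact ((RatFunc.X : RatFunc ℚ)^2) (m+1) :=
      Finset.sum_congr rfl fun k hk =>
        term_eq (m+1) k (by have := Finset.mem_range.1 hk; omega)
    rw [h1, ← Finset.sum_div, ← Finset.mul_sum, gauss ((RatFunc.X : RatFunc ℚ)^2) m,
      mul_zero, zero_div]
    simp

end QExpAux

/-- In `ℚ(t)[[x]]` one has `exp_t(x) · exp_{t⁻¹}(−x) = 1`; in particular `exp_t(x)` is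
    invertible with inverse `exp_{t⁻¹}(−x)`. -/
theorem qExp_mul_qExpNeg_inv :
    qExp (RatFunc.X : RatFunc ℚ) * qExpNeg (RatFunc.X : RatFunc ℚ)⁻¹ = 1 ∧
      IsUnit (qExp (RatFunc.X : RatFunc ℚ)) := by
  have h : qExp (RatFunc.X : RatFunc ℚ) * qExpNeg (RatFunc.X : RatFunc ℚ)⁻¹ = 1 :=
    PowerSeries.ext fun n => by
      rw [QExpAux.coeff_prod n, PowerSeries.coeff_one]
  exact ⟨h, IsUnit.of_mul_eq_one _ h⟩
end

section
/- Let H be a Hopf algebra over a field K and f ∈ H* an element such that the left H-submodule M = H·f of H* is finite-dimensional. Then f is a matrix coefficient of M: explicitly, if {v_j} is a basis of M with dual basis {v_j*} of M*, then f = Σ_j ⟨v_j, 1_H⟩ · Φ_M(f ⊗ v_j*), where ⟨Φ_M(v ⊗ v*), h⟩ = ⟨v*, h v⟩. In particular, f lies in the image of Φ_M. -/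
/-- Let `H` be a Hopf algebra over a field `K` (only its algebra structure is used) and
`f ∈ H*` such that the left `H`-submodule `M = H·f` of `H*` is finite-dimensional, where
the left action is `⟨h·φ, h'⟩ = ⟨φ, h' h⟩`; concretely `M` is the range of the linear map
`T : H →ₗ H*`, `T h = (h' ↦ f (h' h))`.  Then `f` is a matrix coefficient of `M`:
if `{v_j}` is a (finite) basis of `M` with dual basis `{v_j*}`, then
`f = Σ_j ⟨v_j, 1_H⟩ • Φ_M(f ⊗ v_j*)`, where `⟨Φ_M(v ⊗ v*), h⟩ = ⟨v*, h·v⟩`.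
In particular `f` lies in `M = H·f` (so in the image of `Φ_M`). -/
theorem matrixCoefficient_of_finite_translates
    (K H : Type*) [Field K] [Ring H] [Algebra K H] [HopfAlgebra K H]
    (f : Module.Dual K H)
    (T : H →ₗ[K] Module.Dual K H) (hT : ∀ h h' : H, T h h' = f (h' * h))
    (ι : Type*) [Fintype ι] (b : Module.Basis ι K (LinearMap.range T)) :
    (f ∈ LinearMap.range T) ∧
    (∀ h : H,
      f h = ∑ j : ι,
        ((b j : Module.Dual K H) (1 : H)) *
          (b.coord j ⟨T h, LinearMap.mem_range_self T h⟩)) := by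
  constructor
  · exact ⟨1, by ext h'; simp [hT]⟩
  · intro h
    set m : LinearMap.range T := ⟨T h, LinearMap.mem_range_self T h⟩ with hm
    have h1 : f h = (m : Module.Dual K H) 1 := by
      simp [hm, hT h 1]
    rw [h1]
    conv_lhs => rw [← b.sum_repr m]
    rw [Submodule.coe_sum]
    simp only [Module.Basis.coord_apply, SetLike.val_smul, LinearMap.coe_sum,
      Finset.sum_apply, LinearMap.smul_apply, smul_eq_mul]
    exact Finset.sum_congr rfl fun j _ => mul_comm _ _
end

section
/- Let 𝒞 and 𝒟 be abelian categories and let L : 𝒟 → 𝒞 be left adjoint to Γ : 𝒞 → 𝒟. Assume: (1) Γ is exact; (2) the unit Id_𝒟 → Γ∘L is an isomorphism; (3) Γ reflects zero objects, i.e. Γ(M) ≅ 0 implies M ≅ 0. Then the counit L∘Γ → Id_𝒞 is an isomorphism, and hence L and Γ are mutually inverse equivalences of categories. -/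
/-!
By the triangle identity `Γ ε ∘ η_Γ = 𝟙`, invertibility of the unit makes `Γ ε` invertible. Since `Γ`
preserves kernels (as a right adjoint) and cokernels, the kernel and cokernel of `ε_N` are sent to
zero objects, hence are zero; so `ε_N` is mono and epi, hence an isomorphism in the abelian
category `C`.
-/

open CategoryTheory CategoryTheory.Limits

universe v₁ v₂ u₁ u₂

namespace CategoryTheory.Functor

variable {C D : Type*} [Category* C] [Category* D] [Preadditive C] [HasZeroMorphisms D]
  (F : C ⥤ D) [F.PreservesZeroMorphisms]

theorem reflectsMonomorphisms_of_reflects_isZero [HasKernels C]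
    [PreservesLimitsOfShape WalkingParallelPair F] (hF : ∀ X, IsZero (F.obj X) → IsZero X) :
    F.ReflectsMonomorphisms where
  reflects f _ := Preadditive.mono_of_isZero_kernel f <| hF _ <|
    KernelFork.IsLimit.isZero_of_mono (KernelFork.mapIsLimit _ (kernelIsKernel f) F)

theorem reflectsEpimorphisms_of_reflects_isZero [HasCokernels C]
    [PreservesColimitsOfShape WalkingParallelPair F] (hF : ∀ X, IsZero (F.obj X) → IsZero X) :
    F.ReflectsEpimorphisms where
  reflects f _ := Preadditive.epi_of_isZero_cokernel f <| hF _ <|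
    CokernelCofork.IsColimit.isZero_of_epi (CokernelCofork.mapIsColimit _ (cokernelIsCokernel f) F)

end CategoryTheory.Functor

namespace CategoryTheory.Adjunction

variable {C D : Type*} [Category* C] [Category* D] {L : D ⥤ C} {R : C ⥤ D} (adj : L ⊣ R)

theorem isIso_map_counit_app_of_isIso_unit [IsIso adj.unit] (X : C) :
    IsIso (R.map (adj.counit.app X)) :=
  IsIso.of_isIso_fac_left (adj.right_triangle_components X)

theorem isIso_counit_of_isIso_unit [R.ReflectsIsomorphisms] [IsIso adj.unit] :
    IsIso adj.counit :=
  have := adj.isIso_map_counit_app_of_isIso_unit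
  have (X : C) : IsIso (adj.counit.app X) := isIso_of_reflects_iso _ R
  NatIso.isIso_of_isIso_app _

end CategoryTheory.Adjunction

theorem adjoint_equivalence_of_exact_unit_iso_reflects_zero_general
    (C : Type u₁) [Category.{v₁} C] [Abelian C]
    (D : Type u₂) [Category.{v₂} D] [Abelian D]
    (L : D ⥤ C) (Γ : C ⥤ D)
    (adj : L ⊣ Γ)
    [PreservesFiniteColimits Γ]
    (hunit : IsIso adj.unit)
    (hzero : ∀ X : C, IsZero (Γ.obj X) → IsZero X) :
    IsIso adj.counit ∧ L.IsEquivalence ∧ Γ.IsEquivalence := by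
  have := adj.rightAdjoint_preservesLimits
  have := Γ.reflectsMonomorphisms_of_reflects_isZero hzero
  have := Γ.reflectsEpimorphisms_of_reflects_isZero hzero
  have := adj.isIso_counit_of_isIso_unit
  exact ⟨this, adj.toEquivalence.isEquivalence_functor, adj.toEquivalence.isEquivalence_inverse⟩

/-- Let `𝒞` and `𝒟` be abelian categories and `L : 𝒟 ⥤ 𝒞` left adjoint to
`Γ : 𝒞 ⥤ 𝒟` (an adjoint pair of additive functors).  Assume: (1) `Γ` is exact;
(2) the unit `Id → Γ∘L` is an isomorphism; (3) `Γ` reflects zero objects.  Then the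
counit `L∘Γ → Id` is an isomorphism, and `L` and `Γ` are mutually inverse equivalences
of categories. -/
theorem adjoint_equivalence_of_exact_unit_iso_reflects_zero
    (C : Type u₁) [Category.{v₁} C] [Abelian C]
    (D : Type u₂) [Category.{v₂} D] [Abelian D]
    (L : D ⥤ C) (Γ : C ⥤ D) [L.Additive] [Γ.Additive]
    (adj : L ⊣ Γ)
    [PreservesFiniteLimits Γ] [PreservesFiniteColimits Γ]
    (hunit : IsIso adj.unit)
    (hzero : ∀ X : C, IsZero (Γ.obj X) → IsZero X) :
    IsIso adj.counit ∧ L.IsEquivalence ∧ Γ.IsEquivalence :=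
  adjoint_equivalence_of_exact_unit_iso_reflects_zero_general C D L Γ adj hunit hzero
end

section
/- Let R be a Λ-graded ring (Λ an abelian group) and S ⊆ R a multiplicative set consisting of homogeneous elements which satisfies the left Ore condition and such that the canonical map R → S⁻¹R is injective. Then the Ore localization S⁻¹R carries a unique Λ-grading such that R → S⁻¹R is a graded ring homomorphism, with the degree of s⁻¹r equal to deg(r) − deg(s) for homogeneous r ∈ R, s ∈ S. -/
/-!
Give the fraction `r /ₒ s` of homogeneous `r` and `s` the degree `deg r - deg s`. These
fractions are closed under sums and products because the Ore condition can be solved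
homogeneously: in `u * r = v * s` the denominator `u ∈ S` is homogeneous, so `v` may be replaced
by its component of degree `deg u + deg r - deg s`. Finitely many homogeneous fractions then have
a common homogeneous denominator, and injectivity of `R → S⁻¹R` turns a vanishing sum of them
into a vanishing sum of numerators of distinct degrees, which gives independence. Uniqueness
holds because any admissible grading contains this one degreewise, and in a modular lattice an
independent family containing a spanning family degreewise equals it.
-/

open OreLocalization DirectSum

theorem AddSubgroup.iSupIndep_iff_finsetSum_eq_zero_imp_eq_zero {ι G : Type*} [AddCommGroup G]
    (p : ι → AddSubgroup G) :
    iSupIndep p ↔ ∀ (s : Finset ι) (v : ι → G),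
      (∀ i ∈ s, v i ∈ p i) → ∑ i ∈ s, v i = 0 → ∀ i ∈ s, v i = 0 := by
  rw [← iSupIndep_map_orderIso_iff AddSubgroup.toIntSubmodule]
  exact _root_.iSupIndep_iff_finsetSum_eq_zero_imp_eq_zero _

theorem SetLike.mul_mem_graded_of_add_eq {ι R σ : Type*} [Add ι] [Mul R] [SetLike σ R]
    {A : ι → σ} [SetLike.GradedMul A] {a b : R} {i j k : ι} (ha : a ∈ A i) (hb : b ∈ A j)
    (h : i + j = k) : a * b ∈ A k :=
  h ▸ SetLike.mul_mem_graded ha hb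

theorem DirectSum.coe_decompose_sub_mul_of_mul_mem {ι A σ : Type*} [DecidableEq ι] [AddGroup ι]
    [Semiring A] [SetLike σ A] [AddSubmonoidClass σ A] (𝒜 : ι → σ) [GradedRing 𝒜]
    {a s : A} {μ ν : ι} (hs : s ∈ 𝒜 μ) (has : a * s ∈ 𝒜 ν) :
    (decompose 𝒜 a (ν - μ) : A) * s = a * s := by
  rw [← coe_decompose_mul_add_of_right_mem 𝒜 hs, sub_add_cancel, decompose_of_mem_same 𝒜 has]

namespace OreLocalization

theorem eq_zero_of_oreDiv_eq_zero {R : Type*} [Ring R] {S : Submonoid R} [OreSet S]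
    (hinj : Function.Injective (fun r : R => r /ₒ (1 : S))) {r : R} {s : S} (h : r /ₒ s = 0) :
    r = 0 :=
  hinj <| show r /ₒ (1 : S) = 0 /ₒ 1 by
    rw [← OreLocalization.mul_cancel (s := s), h, mul_zero, zero_oreDiv']

theorem sum_oreDiv {R ι : Type*} [Ring R] {S : Submonoid R} [OreSet S] (F : Finset ι)
    (r : ι → R) (s : S) : (∑ i ∈ F, r i) /ₒ s = ∑ i ∈ F, r i /ₒ s :=
  map_sum (AddMonoidHom.mk' (· /ₒ s) fun _ _ => add_oreDiv.symm) r F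

variable {Λ R : Type*} [AddCommGroup Λ] [DecidableEq Λ] [Ring R]
  (𝒜 : Λ → AddSubgroup R) [GradedRing 𝒜] (S : Submonoid R) [OreSet S]

theorem exists_homogeneous_ore (hS : ∀ s : S, SetLike.IsHomogeneousElem 𝒜 (s : R))
    {r : R} {s : S} {lam μ : Λ} (hr : r ∈ 𝒜 lam) (hs : (s : R) ∈ 𝒜 μ) :
    ∃ (u : S) (v : R) (ν : Λ), (u : R) ∈ 𝒜 ν ∧ v ∈ 𝒜 (ν + lam - μ) ∧ (u : R) * r = v * s := by
  obtain ⟨ν, hu⟩ := hS (oreDenom r s)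
  have hur : oreNum r s * s ∈ 𝒜 (ν + lam) := ore_eq r s ▸ SetLike.mul_mem_graded hu hr
  refine ⟨oreDenom r s, decompose 𝒜 (oreNum r s) (ν + lam - μ), ν, hu, SetLike.coe_mem _, ?_⟩
  rw [coe_decompose_sub_mul_of_mul_mem 𝒜 hs hur, ore_eq]

theorem exists_homogeneous_oreDiv_eq_oreDiv_mul
    (hS : ∀ s : S, SetLike.IsHomogeneousElem 𝒜 (s : R)) {r : R} {s t : S} {lam μ κ : Λ}
    (hr : r ∈ 𝒜 (lam + μ)) (hs : (s : R) ∈ 𝒜 μ) (ht : (t : R) ∈ 𝒜 κ) :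
    ∃ (u : S) (ν : Λ) (r' : R), (u : R) ∈ 𝒜 ν ∧ r' ∈ 𝒜 (lam + (ν + κ)) ∧
      r /ₒ s = r' /ₒ (u * t) := by
  obtain ⟨u, v, ν, hu, hv, huv⟩ := exists_homogeneous_ore 𝒜 S hS ht hs
  have hvs : v * (s : R) ∈ S := huv ▸ (u * t).2
  refine ⟨u, ν, v * r, hu, SetLike.mul_mem_graded_of_add_eq hv hr (by abel), ?_⟩
  rw [OreLocalization.expand r s v hvs, smul_eq_mul]
  congr 1
  exact Subtype.ext huv.symm

def oreGrading (hS : ∀ s : S, SetLike.IsHomogeneousElem 𝒜 (s : R)) (lam : Λ) :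
    AddSubgroup R[S⁻¹] where
  carrier := {x | ∃ (μ : Λ) (r : R) (s : S), r ∈ 𝒜 (lam + μ) ∧ (s : R) ∈ 𝒜 μ ∧ r /ₒ s = x}
  zero_mem' := ⟨0, 0, 1, zero_mem _, SetLike.one_mem_graded 𝒜, zero_oreDiv' 1⟩
  neg_mem' := by
    rintro _ ⟨μ, r, s, hr, hs, rfl⟩
    exact ⟨μ, -r, s, neg_mem hr, hs, (OreLocalization.neg_def r s).symm⟩
  add_mem' := by
    rintro _ _ ⟨μ, r, s, hr, hs, rfl⟩ ⟨μ', r', s', hr', hs', rfl⟩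
    obtain ⟨u, ν, r'', hu, hr'', he⟩ :=
      exists_homogeneous_oreDiv_eq_oreDiv_mul 𝒜 S hS hr' hs' hs
    refine ⟨ν + μ, u * r + r'', u * s, add_mem ?_ hr'', SetLike.mul_mem_graded hu hs, ?_⟩
    · exact SetLike.mul_mem_graded_of_add_eq hu hr (by abel)
    · rw [← add_oreDiv, he, OreLocalization.expand' r s u, Submonoid.smul_def, smul_eq_mul]

variable {𝒜 S} {hS : ∀ s : S, SetLike.IsHomogeneousElem 𝒜 (s : R)}

theorem oreDiv_mem_oreGrading {r : R} {s : S} {lam μ : Λ} (hr : r ∈ 𝒜 lam)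
    (hs : (s : R) ∈ 𝒜 μ) : r /ₒ s ∈ oreGrading 𝒜 S hS (lam - μ) :=
  ⟨μ, r, s, by rwa [sub_add_cancel], hs, rfl⟩

theorem oreDiv_one_mem_oreGrading {r : R} {lam : Λ} (hr : r ∈ 𝒜 lam) :
    r /ₒ (1 : S) ∈ oreGrading 𝒜 S hS lam :=
  ⟨0, r, 1, by rwa [add_zero], SetLike.one_mem_graded 𝒜, rfl⟩

theorem mul_mem_oreGrading {lam lam' : Λ} {x y : R[S⁻¹]} (hx : x ∈ oreGrading 𝒜 S hS lam)
    (hy : y ∈ oreGrading 𝒜 S hS lam') : x * y ∈ oreGrading 𝒜 S hS (lam + lam') := by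
  obtain ⟨μ, r, s, hr, hs, rfl⟩ := hx
  obtain ⟨μ', r', s', hr', hs', rfl⟩ := hy
  obtain ⟨u, v, ν, hu, hv, huv⟩ := exists_homogeneous_ore 𝒜 S hS hr hs'
  exact ⟨ν + μ, v * r', u * s, SetLike.mul_mem_graded_of_add_eq hv hr' (by abel),
    SetLike.mul_mem_graded hu hs, (oreDiv_mul_char r r' s s' v u huv).symm⟩

theorem iSup_oreGrading_eq_top : ⨆ lam, oreGrading 𝒜 S hS lam = ⊤ := by
  rw [eq_top_iff]
  rintro x -
  induction x with
  | _ r s =>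
    obtain ⟨μ, hs⟩ := hS s
    induction r using DirectSum.Decomposition.inductionOn 𝒜 with
    | zero => rw [zero_oreDiv']; exact zero_mem _
    | homogeneous m => exact AddSubgroup.mem_iSup_of_mem _ (oreDiv_mem_oreGrading m.2 hs)
    | add r r' hr hr' => rw [← add_oreDiv]; exact add_mem hr hr'

theorem exists_common_denom_of_mem_oreGrading (F : Finset Λ) (x : Λ → R[S⁻¹])
    (hx : ∀ lam ∈ F, x lam ∈ oreGrading 𝒜 S hS lam) :
    ∃ (ν : Λ) (r : Λ → R) (s : S), (s : R) ∈ 𝒜 ν ∧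
      ∀ lam ∈ F, r lam ∈ 𝒜 (lam + ν) ∧ r lam /ₒ s = x lam := by
  classical
  induction F using Finset.induction_on with
  | empty => exact ⟨0, 0, 1, SetLike.one_mem_graded 𝒜, by simp⟩
  | insert a F _ ih =>
    obtain ⟨ν, r, s, hs, hr⟩ := ih fun lam hlam => hx lam (Finset.mem_insert_of_mem hlam)
    obtain ⟨μ, ra, sa, hra, hsa, hxa⟩ := hx a (Finset.mem_insert_self a F)
    obtain ⟨u, ν', ra', hu, hra', he⟩ :=
      exists_homogeneous_oreDiv_eq_oreDiv_mul 𝒜 S hS hra hsa hs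
    refine ⟨ν' + ν, Function.update (fun lam => u * r lam) a ra', u * s,
      SetLike.mul_mem_graded hu hs, fun lam hlam => ?_⟩
    rcases eq_or_ne lam a with rfl | hne
    · rw [Function.update_self]
      exact ⟨hra', he.symm.trans hxa⟩
    · obtain ⟨hrl, hxl⟩ := hr lam ((Finset.mem_insert.mp hlam).resolve_left hne)
      rw [Function.update_of_ne hne, ← hxl, OreLocalization.expand' (r lam) s u,
        Submonoid.smul_def, smul_eq_mul]
      exact ⟨SetLike.mul_mem_graded_of_add_eq hu hrl (by abel), rfl⟩

theorem iSupIndep_oreGrading (hinj : Function.Injective (fun r : R => r /ₒ (1 : S))) :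
    iSupIndep (oreGrading 𝒜 S hS) := by
  rw [AddSubgroup.iSupIndep_iff_finsetSum_eq_zero_imp_eq_zero]
  intro F x hx hsum
  obtain ⟨ν, r, s, -, hr⟩ := exists_common_denom_of_mem_oreGrading F x hx
  have hnum : ∑ lam ∈ F, r lam = 0 := eq_zero_of_oreDiv_eq_zero hinj <| by
    rw [sum_oreDiv, ← hsum]
    exact Finset.sum_congr rfl fun lam hlam => (hr lam hlam).2
  have hindep : iSupIndep fun lam => 𝒜 (lam + ν) :=
    (Decomposition.isInternal 𝒜).addSubgroup_iSupIndep.comp (add_left_injective ν)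
  intro lam hlam
  rw [← (hr lam hlam).2, (AddSubgroup.iSupIndep_iff_finsetSum_eq_zero_imp_eq_zero _).mp hindep
    F r (fun μ hμ => (hr μ hμ).1) hnum lam hlam, zero_oreDiv']

end OreLocalization

/-- Let `R` be a `Λ`-graded ring (`Λ` an abelian group) and `S ⊆ R` a multiplicative set
of homogeneous elements satisfying the (left) Ore condition and such that `R → S⁻¹R` is
injective.  Then the Ore localization `S⁻¹R` carries a unique `Λ`-grading (a family of
additive subgroups which is independent, exhaustive and multiplicative) such that
`R → S⁻¹R` is a graded ring homomorphism and the degree of the fraction `r /ₒ s` is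
`deg r − deg s` for homogeneous `r ∈ R`, `s ∈ S`. -/
theorem ore_localization_graded
    (Λ R : Type*) [AddCommGroup Λ] [DecidableEq Λ] [Ring R]
    (𝒜 : Λ → AddSubgroup R) [SetLike.GradedMonoid 𝒜] [DirectSum.Decomposition 𝒜]
    (S : Submonoid R) [OreLocalization.OreSet S]
    (hhom : ∀ s : S, ∃ lam : Λ, (s : R) ∈ 𝒜 lam)
    (hinj : Function.Injective (fun r : R => r /ₒ (1 : S))) :
    ∃! ℬ : Λ → AddSubgroup (R[S⁻¹]),
      iSupIndep ℬ ∧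
      (⨆ lam : Λ, ℬ lam) = ⊤ ∧
      (1 : R[S⁻¹]) ∈ ℬ 0 ∧
      (∀ (lam mu : Λ) (x y : R[S⁻¹]), x ∈ ℬ lam → y ∈ ℬ mu → x * y ∈ ℬ (lam + mu)) ∧
      (∀ (lam : Λ) (r : R), r ∈ 𝒜 lam → (r /ₒ (1 : S)) ∈ ℬ lam) ∧
      (∀ (lam mu : Λ) (r : R) (s : S), r ∈ 𝒜 lam → (s : R) ∈ 𝒜 mu →
        (r /ₒ s) ∈ ℬ (lam - mu)) := by
  let : GradedRing 𝒜 := {}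
  refine ⟨oreGrading 𝒜 S hhom, ⟨iSupIndep_oreGrading hinj, iSup_oreGrading_eq_top, ?_,
    fun _ _ _ _ => mul_mem_oreGrading, fun _ _ => oreDiv_one_mem_oreGrading,
    fun _ _ _ _ => oreDiv_mem_oreGrading⟩, ?_⟩
  · rw [OreLocalization.one_def]
    exact oreDiv_one_mem_oreGrading (SetLike.one_mem_graded 𝒜)
  · rintro ℬ ⟨hindep, -, -, -, -, hdiv⟩
    refine ((hindep.le_iff_eq_of_iSup_eq_top iSup_oreGrading_eq_top).mp ?_).symm
    rintro lam _ ⟨μ, r, s, hr, hs, rfl⟩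
    simpa using hdiv _ _ r s hr hs
end

section
/- Let H be a Hopf algebra over a field K generated as an algebra by a set X consisting of grouplike elements g (Δ(g)=g⊗g) and skew-primitive elements x (Δ(x) = x⊗g + g'⊗x with g, g' ∈ X grouplike and invertible, with g, g' acting invertibly on the modules below). Let A be a left H-module algebra and S ⊆ A a left and right Ore set such that A → S⁻¹A is injective. Then there is at most one H-module algebra structure on S⁻¹A extending the given H-action on A; i.e. if two left H-module structures on S⁻¹A both satisfy (a) the inclusion A ↪ S⁻¹A is H-linear and (b) u·(φψ) = Σ (u_{(1)}·φ)(u_{(2)}·ψ) for all u ∈ H and φ, ψ ∈ S⁻¹A, then they coincide. -/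
open TensorProduct

/-!
Write `b ∈ B` as a left fraction, `ι s * b = ι a`. A grouplike `g` acts multiplicatively, so
`ρ g (ι s) * ρ g b = ρ g (ι a)`; as `ε g = 1`, `ρ g` fixes `1` and hence sends the unit `ι s`
to a unit, and `ρ g b` is determined by the action on `A`. For a skew-primitive `x`,
`ρ x (ι s * b) = ρ x (ι s) * ρ g b + ρ g' (ι s) * ρ x b`, which determines `ρ x b` once
`ρ g b` is known. Two actions agreeing on the generators of `H` agree everywhere.
-/

section

variable {K H A B : Type*} [CommSemiring K] [Semiring H] [Bialgebra K H]

def IsModuleAlgebraAction [Semiring B] [Algebra K B] (τ : H →ₐ[K] Module.End K B) : Prop :=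
  ∀ (u : H) (x y : B), τ u (x * y) =
    LinearMap.mul' K B
      (TensorProduct.map (τ.toLinearMap.flip x) (τ.toLinearMap.flip y) (Coalgebra.comul (R := K) u))

namespace IsModuleAlgebraAction

section Semiring

variable [Semiring B] [Algebra K B] {τ : H →ₐ[K] Module.End K B}

theorem map_mul_of_comul_eq_tmul (hτ : IsModuleAlgebraAction τ) {u v w : H}
    (hu : Coalgebra.comul (R := K) u = v ⊗ₜ w) (x y : B) : τ u (x * y) = τ v x * τ w y := by
  rw [hτ, hu]
  simp only [map_tmul, LinearMap.flip_apply, AlgHom.toLinearMap_apply, LinearMap.mul'_apply]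

theorem map_mul_of_comul_eq_add_tmul (hτ : IsModuleAlgebraAction τ) {u v w v' w' : H}
    (hu : Coalgebra.comul (R := K) u = v ⊗ₜ w + v' ⊗ₜ w') (x y : B) :
    τ u (x * y) = τ v x * τ w y + τ v' x * τ w' y := by
  rw [hτ, hu]
  simp only [map_add, map_tmul, LinearMap.flip_apply, AlgHom.toLinearMap_apply,
    LinearMap.mul'_apply]

theorem isUnit_apply (hτ : IsModuleAlgebraAction τ) {g : H}
    (hg : Coalgebra.comul (R := K) g = g ⊗ₜ g) (hg1 : τ g 1 = 1) {b : B} (hb : IsUnit b) :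
    IsUnit (τ g b) :=
  hb.map (MonoidHom.mk ⟨τ g, hg1⟩ (hτ.map_mul_of_comul_eq_tmul hg))

end Semiring

section Ring

variable [Semiring A] [Algebra K A] [Ring B] [Algebra K B] {ρ σ : H →ₐ[K] Module.End K B}
  {ι : A →ₐ[K] B} {S : Submonoid A}

theorem eq_of_comul_eq_tmul_self (hρ : IsModuleAlgebraAction ρ) (hσ : IsModuleAlgebraAction σ)
    (hagree : ∀ (u : H) (a : A), ρ u (ι a) = σ u (ι a)) (hS : ∀ s : S, IsUnit (ι s))
    (hfrac : ∀ b : B, ∃ (s : S) (a : A), ι s * b = ι a) {g : H}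
    (hg : Coalgebra.comul (R := K) g = g ⊗ₜ g) (hg1 : ρ g 1 = 1) : ρ g = σ g := by
  ext b
  obtain ⟨s, a, hsa⟩ := hfrac b
  refine (hρ.isUnit_apply hg hg1 (hS s)).mul_left_cancel ?_
  calc ρ g (ι s) * ρ g b = ρ g (ι a) := by rw [← hρ.map_mul_of_comul_eq_tmul hg, hsa]
    _ = σ g (ι a) := hagree g a
    _ = ρ g (ι s) * σ g b := by rw [← hsa, hσ.map_mul_of_comul_eq_tmul hg, hagree]

theorem eq_of_comul_eq_skew (hρ : IsModuleAlgebraAction ρ) (hσ : IsModuleAlgebraAction σ)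
    (hagree : ∀ (u : H) (a : A), ρ u (ι a) = σ u (ι a)) (hS : ∀ s : S, IsUnit (ι s))
    (hfrac : ∀ b : B, ∃ (s : S) (a : A), ι s * b = ι a) {x g g' : H}
    (hx : Coalgebra.comul (R := K) x = x ⊗ₜ g + g' ⊗ₜ x) (hg : ρ g = σ g)
    (hg' : Coalgebra.comul (R := K) g' = g' ⊗ₜ g') (hg'1 : ρ g' 1 = 1) : ρ x = σ x := by
  ext b
  obtain ⟨s, a, hsa⟩ := hfrac b
  have key : ρ x (ι s) * ρ g b + ρ g' (ι s) * ρ x b =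
      ρ x (ι s) * ρ g b + ρ g' (ι s) * σ x b :=
    calc ρ x (ι s) * ρ g b + ρ g' (ι s) * ρ x b = ρ x (ι a) := by
          rw [← hρ.map_mul_of_comul_eq_add_tmul hx, hsa]
      _ = σ x (ι a) := hagree x a
      _ = ρ x (ι s) * ρ g b + ρ g' (ι s) * σ x b := by
          rw [← hsa, hσ.map_mul_of_comul_eq_add_tmul hx, hagree, hagree, hg]
  exact (hρ.isUnit_apply hg' hg'1 (hS s)).mul_left_cancel (add_left_cancel key)

end Ring

end IsModuleAlgebraAction

theorem apply_one_of_counit_eq_one [Semiring A] [Algebra K A] [Semiring B] [Algebra K B]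
    {act0 : H →ₐ[K] Module.End K A} {ι : A →ₐ[K] B} {τ : H →ₐ[K] Module.End K B}
    (hact0_one : ∀ u : H, act0 u 1 = Coalgebra.counit (R := K) u • 1)
    (hcompat : ∀ (u : H) (a : A), τ u (ι a) = ι (act0 u a)) {g : H}
    (hg : Coalgebra.counit (R := K) g = 1) : τ g 1 = 1 := by
  simpa [hact0_one, hg] using hcompat g 1

end

theorem ore_localization_module_algebra_unique_general
    (K H A B : Type*) [Field K] [Ring H] [HopfAlgebra K H]
    [Ring A] [Algebra K A] [Ring B] [Algebra K B]
    (act0 : H →ₐ[K] Module.End K A)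
    (hact0_one : ∀ u : H, act0 u (1 : A) = Coalgebra.counit (R := K) u • (1 : A))
    (S : Submonoid A)
    (ι : A →ₐ[K] B)
    (hS : ∀ s : S, IsUnit (ι s))
    (hfrac : ∀ b : B, ∃ (s : S) (a : A), (ι s) * b = ι a)
    (X : Set H) (hgen : Algebra.adjoin K X = ⊤)
    (ρ σ : H →ₐ[K] Module.End K B)
    (hρcompat : ∀ (u : H) (a : A), ρ u (ι a) = ι (act0 u a))
    (hσcompat : ∀ (u : H) (a : A), σ u (ι a) = ι (act0 u a))
    (hρmul : ∀ (u : H) (x y : B),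
      ρ u (x * y) =
        (LinearMap.mul' K B)
          ((TensorProduct.map (ρ.toLinearMap.flip x) (ρ.toLinearMap.flip y))
            (Coalgebra.comul (R := K) u)))
    (hσmul : ∀ (u : H) (x y : B),
      σ u (x * y) =
        (LinearMap.mul' K B)
          ((TensorProduct.map (σ.toLinearMap.flip x) (σ.toLinearMap.flip y))
            (Coalgebra.comul (R := K) u)))
    (hX : ∀ x ∈ X,
      (Coalgebra.comul (R := K) x = x ⊗ₜ[K] x ∧ Coalgebra.counit (R := K) x = (1 : K) ∧
        IsUnit x ∧ IsUnit (ρ x) ∧ IsUnit (σ x)) ∨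
      (∃ g ∈ X, ∃ g' ∈ X,
        (Coalgebra.comul (R := K) g = g ⊗ₜ[K] g ∧
          Coalgebra.counit (R := K) g = (1 : K) ∧ IsUnit g ∧
          IsUnit (ρ g) ∧ IsUnit (σ g)) ∧
        (Coalgebra.comul (R := K) g' = g' ⊗ₜ[K] g' ∧
          Coalgebra.counit (R := K) g' = (1 : K) ∧ IsUnit g' ∧
          IsUnit (ρ g') ∧ IsUnit (σ g')) ∧
        Coalgebra.comul (R := K) x = x ⊗ₜ[K] g + g' ⊗ₜ[K] x)) :
    ρ = σ := by
  have hρ : IsModuleAlgebraAction ρ := hρmul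
  have hσ : IsModuleAlgebraAction σ := hσmul
  have hagree : ∀ (u : H) (a : A), ρ u (ι a) = σ u (ι a) := fun u a =>
    (hρcompat u a).trans (hσcompat u a).symm
  have hone : ∀ g : H, Coalgebra.counit (R := K) g = 1 → ρ g 1 = 1 := fun _ =>
    apply_one_of_counit_eq_one hact0_one hρcompat
  refine AlgHom.ext_of_adjoin_eq_top hgen fun x hxX => ?_
  rcases hX x hxX with ⟨hx, hεx, -⟩ | ⟨g, -, g', -, ⟨hg, hεg, -⟩, ⟨hg', hεg', -⟩, hx⟩
  · exact hρ.eq_of_comul_eq_tmul_self hσ hagree hS hfrac hx (hone x hεx)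
  · exact hρ.eq_of_comul_eq_skew hσ hagree hS hfrac hx
      (hρ.eq_of_comul_eq_tmul_self hσ hagree hS hfrac hg (hone g hεg)) hg' (hone g' hεg')

/-- Uniqueness of the module-algebra extension of a Hopf algebra action to an Ore
localization.  Let `H` be a Hopf algebra over a field `K`, generated as an algebra by a
set `X` of grouplike and skew-primitive elements (`Δ(x) = x⊗g + g'⊗x` with `g, g' ∈ X`
grouplike, invertible, and acting invertibly on the modules below).  Let `A` be a left
`H`-module algebra and `S ⊆ A` a left and right Ore set such that `A → S⁻¹A` is
injective; here `S⁻¹A` is realized as a `K`-algebra `B` with an injective algebra map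
`ι : A → B` inverting `S` and such that every element of `B` is a left fraction.  Then
there is at most one `H`-module algebra structure on `S⁻¹A` extending the action on `A`:
any two actions `ρ, σ` satisfying (a) `ι` is `H`-linear and (b) the module-algebra law
coincide. -/
theorem ore_localization_module_algebra_unique
    (K H A B : Type*) [Field K] [Ring H] [HopfAlgebra K H]
    [Ring A] [Algebra K A] [Ring B] [Algebra K B]
    (act0 : H →ₐ[K] Module.End K A)
    (hact0_one : ∀ u : H, act0 u (1 : A) = Coalgebra.counit (R := K) u • (1 : A))
    (hact0_mul : ∀ (u : H) (φ ψ : A),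
      act0 u (φ * ψ) =
        (LinearMap.mul' K A)
          ((TensorProduct.map (act0.toLinearMap.flip φ) (act0.toLinearMap.flip ψ))
            (Coalgebra.comul (R := K) u)))
    (S : Submonoid A)
    (hOreL : ∀ (a : A) (s : S), ∃ (a' : A) (s' : S), (s' : A) * a = a' * (s : A))
    (hOreR : ∀ (a : A) (s : S), ∃ (a' : A) (s' : S), a * (s' : A) = (s : A) * a')
    (ι : A →ₐ[K] B) (hinj : Function.Injective ι)
    (hS : ∀ s : S, IsUnit (ι s))
    (hfrac : ∀ b : B, ∃ (s : S) (a : A), (ι s) * b = ι a)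
    (X : Set H) (hgen : Algebra.adjoin K X = ⊤)
    (ρ σ : H →ₐ[K] Module.End K B)
    (hρcompat : ∀ (u : H) (a : A), ρ u (ι a) = ι (act0 u a))
    (hσcompat : ∀ (u : H) (a : A), σ u (ι a) = ι (act0 u a))
    (hρmul : ∀ (u : H) (x y : B),
      ρ u (x * y) =
        (LinearMap.mul' K B)
          ((TensorProduct.map (ρ.toLinearMap.flip x) (ρ.toLinearMap.flip y))
            (Coalgebra.comul (R := K) u)))
    (hσmul : ∀ (u : H) (x y : B),
      σ u (x * y) =
        (LinearMap.mul' K B)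
          ((TensorProduct.map (σ.toLinearMap.flip x) (σ.toLinearMap.flip y))
            (Coalgebra.comul (R := K) u)))
    (hX : ∀ x ∈ X,
      (Coalgebra.comul (R := K) x = x ⊗ₜ[K] x ∧ Coalgebra.counit (R := K) x = (1 : K) ∧
        IsUnit x ∧ IsUnit (ρ x) ∧ IsUnit (σ x)) ∨
      (∃ g ∈ X, ∃ g' ∈ X,
        (Coalgebra.comul (R := K) g = g ⊗ₜ[K] g ∧
          Coalgebra.counit (R := K) g = (1 : K) ∧ IsUnit g ∧
          IsUnit (ρ g) ∧ IsUnit (σ g)) ∧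
        (Coalgebra.comul (R := K) g' = g' ⊗ₜ[K] g' ∧
          Coalgebra.counit (R := K) g' = (1 : K) ∧ IsUnit g' ∧
          IsUnit (ρ g') ∧ IsUnit (σ g')) ∧
        Coalgebra.comul (R := K) x = x ⊗ₜ[K] g + g' ⊗ₜ[K] x)) :
    ρ = σ :=
  ore_localization_module_algebra_unique_general K H A B act0 hact0_one S ι hS hfrac X hgen ρ σ
    hρcompat hσcompat hρmul hσmul hX
end
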